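/- arXiv:2002.01498 — 6 statements merged into one kernel-verified Lean document; each statement's English description precedes it below -/
import Mathlib

section
/- Let d, k ≥ 2 be integers and J a graph. Suppose J has a k-regular proper blow-up F on 3k-1 vertices, and H is a proper blow-up of J on n vertices satisfying δ(H) > (d+1)n/(3d+2) and Δ(H) < (d-1)n/(3d-4). Then k = d. -/
/-!
Let `S a = ∑_{b ∼ a} w b` be the common degree in `H = J.blowup w` of the vertices of class `a`,
and weight it by the class sizes `u` of the `k`-regular blow-up `F`. Double counting the pairs
(vertex of `F` in class `a`, vertex of `H` in class `b`) with `a ∼ b` gives `∑ u a * S a = k n`,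
so `(3k - 1) δ(H) ≤ k n ≤ (3k - 1) Δ(H)`. Against the two degree bounds these force
`k < d + 1` and `d < k + 1`.
-/

open Finset

/-- The blow-up of a graph `F` with class sizes given by `w`. -/
def SimpleGraph.blowup {α : Type*} (F : SimpleGraph α) (w : α → ℕ) :
    SimpleGraph (Σ a, Fin (w a)) where
  Adj x y := F.Adj x.1 y.1
  symm := ⟨fun _ _ h => F.symm.symm _ _ h⟩
  loopless := ⟨fun x h => F.loopless.irrefl x.1 h⟩

namespace SimpleGraph

variable {α : Type*} [Fintype α] (J : SimpleGraph α)

open scoped Classical in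
theorem degree_blowup (w : α → ℕ) (x : Σ a, Fin (w a)) :
    (J.blowup w).degree x = ∑ b with J.Adj x.1 b, w b := by
  have : (J.blowup w).neighborFinset x = ({b | J.Adj x.1 b} : Finset α).sigma fun _ => univ := by
    ext y
    rw [mem_neighborFinset]
    simp [blowup]
  rw [← card_neighborFinset_eq_degree, this, card_sigma]
  simp only [card_univ, Fintype.card_fin]

open scoped Classical in
theorem sum_adj_eq_of_isRegularOfDegree_blowup {u : α → ℕ} {k : ℕ} (hu : ∀ a, 0 < u a)
    (hreg : (J.blowup u).IsRegularOfDegree k) (a : α) :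
    ∑ b with J.Adj a b, u b = k := by
  rw [← hreg ⟨a, ⟨0, hu a⟩⟩, degree_blowup]

theorem sum_mul_sum_adj_comm [DecidableRel J.Adj] (u w : α → ℕ) :
    ∑ a, u a * ∑ b with J.Adj a b, w b = ∑ b, w b * ∑ a with J.Adj b a, u a := by
  simp only [mul_sum, sum_filter, mul_ite, mul_zero]
  rw [sum_comm]
  refine sum_congr rfl fun b _ => sum_congr rfl fun a _ => ?_
  simp only [J.adj_comm a b, mul_comm]

open scoped Classical in
theorem sum_mul_degree_blowup_eq {u w : α → ℕ} {k : ℕ} (hu : ∀ a, 0 < u a)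
    (hreg : (J.blowup u).IsRegularOfDegree k) (hw : ∀ a, 0 < w a) :
    ∑ a, u a * (J.blowup w).degree ⟨a, ⟨0, hw a⟩⟩ = k * ∑ a, w a := by
  simp only [degree_blowup]
  rw [sum_mul_sum_adj_comm, mul_sum]
  simp only [J.sum_adj_eq_of_isRegularOfDegree_blowup hu hreg, mul_comm]

open scoped Classical in
theorem sum_mul_minDegree_blowup_le {u w : α → ℕ} {k : ℕ} (hu : ∀ a, 0 < u a)
    (hreg : (J.blowup u).IsRegularOfDegree k) (hw : ∀ a, 0 < w a) :
    (∑ a, u a) * (J.blowup w).minDegree ≤ k * ∑ a, w a := by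
  rw [← J.sum_mul_degree_blowup_eq hu hreg hw, sum_mul]
  exact sum_le_sum fun a _ => Nat.mul_le_mul_left _ (minDegree_le_degree _ _)

open scoped Classical in
theorem le_sum_mul_maxDegree_blowup {u w : α → ℕ} {k : ℕ} (hu : ∀ a, 0 < u a)
    (hreg : (J.blowup u).IsRegularOfDegree k) (hw : ∀ a, 0 < w a) :
    k * ∑ a, w a ≤ (∑ a, u a) * (J.blowup w).maxDegree := by
  rw [← J.sum_mul_degree_blowup_eq hu hreg hw, sum_mul]
  exact sum_le_sum fun a _ => Nat.mul_le_mul_left _ (degree_le_maxDegree _ _)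

end SimpleGraph

-- Scaling `hmin` by `3k - 1` and `hδ` by `3d + 2` leaves `0 < (d + 1 - k) n`.
theorem le_of_mul_le_of_lt_mul {d k n δ : ℕ} (hk : 1 ≤ k)
    (hδ : (3 * k - 1) * δ ≤ k * n) (hmin : (d + 1) * n < (3 * d + 2) * δ) : k ≤ d := by
  zify [show 1 ≤ 3 * k by omega] at hδ
  by_contra! h
  nlinarith

-- Scaling `hΔ` by `3d - 4` and `hmax` by `3k - 1` leaves `0 < (k + 1 - d) n`.
theorem le_of_le_mul_of_mul_lt {d k n Δ : ℕ} (hd : 2 ≤ d) (hk : 1 ≤ k)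
    (hΔ : k * n ≤ (3 * k - 1) * Δ) (hmax : (3 * d - 4) * Δ < (d - 1) * n) : d ≤ k := by
  zify [show 1 ≤ 3 * k by omega, show 4 ≤ 3 * d by omega, show 1 ≤ d by omega] at hΔ hmax
  by_contra! h
  nlinarith

open scoped Classical in
/-- If `J` has a `k`-regular proper blow-up `F` on `3k-1` vertices, `d, k ≥ 2`, and
`H` is a proper blow-up of `J` on `n` vertices with
`δ(H) > (d+1)n/(3d+2)` and `Δ(H) < (d-1)n/(3d-4)`, then `k = d`. -/
theorem stmt_2 {α : Type*} [Fintype α] (J : SimpleGraph α) (d k : ℕ)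
    (hd : 2 ≤ d) (hk : 2 ≤ k)
    (u : α → ℕ) (hu : ∀ a, 0 < u a)
    (hFreg : (J.blowup u).IsRegularOfDegree k)
    (hFcard : ∑ a, u a = 3 * k - 1)
    (w : α → ℕ) (hw : ∀ a, 0 < w a)
    (n : ℕ) (hn : n = ∑ a, w a)
    (hmin : (d + 1) * n < (3 * d + 2) * (J.blowup w).minDegree)
    (hmax : (3 * d - 4) * (J.blowup w).maxDegree < (d - 1) * n) :
    k = d := by
  have hδ := J.sum_mul_minDegree_blowup_le hu hFreg hw
  have hΔ := J.le_sum_mul_maxDegree_blowup hu hFreg hw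
  rw [hFcard, ← hn] at hδ hΔ
  exact le_antisymm (le_of_mul_le_of_lt_mul (by omega) hδ hmin)
    (le_of_le_mul_of_mul_lt hd (by omega) hΔ hmax)
end

section
/- Let k ≥ 2, let F be a k-regular graph on 3k−1 vertices, and let H be an n-vertex blow-up of F such that every vertex class Z of H satisfies |N(Z)| ≤ s and |Z| ≥ (k−1)n − (3k−4)s. Then e(H) ≤ g_k(n,s), where g_k(n,s) = k(k−1)n²/2 − k(3k−4)ns + (3k−4)(3k−1)s²/2. -/
open Finset

/-- The function `g_k(n,s) = k(k-1)n²/2 - k(3k-4)ns + (3k-4)(3k-1)s²/2`. -/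
noncomputable def g (k n s : ℕ) : ℚ :=
  (k : ℚ) * ((k : ℚ) - 1) * (n : ℚ) ^ 2 / 2
    - (k : ℚ) * (3 * (k : ℚ) - 4) * (n : ℚ) * (s : ℚ)
    + (3 * (k : ℚ) - 4) * (3 * (k : ℚ) - 1) * (s : ℚ) ^ 2 / 2

/-!
Write `L = (k-1)n - (3k-4)s`. Every class `Z` has `L ≤ |Z|` and `|N(Z)| ≤ s`, so
`(|Z| - L)(s - |N(Z)|) ≥ 0`, i.e. `|Z||N(Z)| ≤ L|N(Z)| + (|Z| - L)s`. Summing over the `3k-1`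
classes, with `∑ |Z||N(Z)| = 2e(H)`, `∑ |N(Z)| = kn` (as `F` is `k`-regular) and `∑ |Z| = n`,
gives `2e(H) ≤ Lkn + (n - (3k-1)L)s`, and the right-hand side is exactly `2g_k(n,s)`.
-/

namespace SimpleGraph

variable {α : Type*} [Fintype α] (F : SimpleGraph α)

theorem IsRegularOfDegree.sum_sum_neighborFinset {M : Type*} [AddCommMonoid M]
    [DecidableRel F.Adj] {k : ℕ} (hreg : F.IsRegularOfDegree k) (f : α → M) :
    ∑ a, ∑ b ∈ F.neighborFinset a, f b = k • ∑ b, f b := by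
  rw [sum_comm' (t' := univ) (s' := fun b => F.neighborFinset b) (by simp [adj_comm]), smul_sum]
  refine sum_congr rfl fun b _ => ?_
  rw [sum_const, card_neighborFinset_eq_degree, hreg b]

open scoped Classical in
theorem degree_blowup_s5 (w : α → ℕ) (a : α) (i : Fin (w a)) :
    (F.blowup w).degree ⟨a, i⟩ = ∑ b ∈ F.neighborFinset a, w b := by
  have hnbhd : (F.blowup w).neighborFinset ⟨a, i⟩ = (F.neighborFinset a).sigma fun _ => univ := by
    ext y
    simp only [mem_neighborFinset, mem_sigma, mem_univ, and_true]
    rfl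
  rw [← card_neighborFinset_eq_degree, hnbhd, card_sigma]
  simp only [card_univ, Fintype.card_fin]

open scoped Classical in
theorem two_mul_card_edgeFinset_blowup (w : α → ℕ) :
    2 * #(F.blowup w).edgeFinset = ∑ a, w a * ∑ b ∈ F.neighborFinset a, w b := by
  rw [← sum_degrees_eq_twice_card_edges, ← univ_sigma_univ, sum_sigma]
  refine sum_congr rfl fun a _ => ?_
  simp only [degree_blowup_s5]
  rw [sum_const, card_univ, Fintype.card_fin, smul_eq_mul]

end SimpleGraph

theorem Finset.sum_mul_le_of_forall_le {ι R : Type*} [CommRing R] [LinearOrder R]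
    [IsStrictOrderedRing R] (s : Finset ι) {w d : ι → R} {L S : R}
    (hw : ∀ i ∈ s, L ≤ w i) (hd : ∀ i ∈ s, d i ≤ S) :
    ∑ i ∈ s, w i * d i ≤ L * ∑ i ∈ s, d i + (∑ i ∈ s, w i - #s * L) * S := by
  calc ∑ i ∈ s, w i * d i ≤ ∑ i ∈ s, (L * d i + (w i - L) * S) := by
        refine sum_le_sum fun i hi => ?_
        nlinarith [mul_nonneg (sub_nonneg.2 (hw i hi)) (sub_nonneg.2 (hd i hi))]
    _ = L * ∑ i ∈ s, d i + (∑ i ∈ s, w i - #s * L) * S := by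
        rw [sum_add_distrib, ← mul_sum, ← sum_mul, sum_sub_distrib,
          sum_const, nsmul_eq_mul]

open scoped Classical in
/-- If `k ≥ 2`, `F` is a `k`-regular graph on `3k-1` vertices, and `H` is an
`n`-vertex blow-up of `F` all of whose vertex classes `Z` satisfy `|N(Z)| ≤ s`
and `|Z| ≥ (k-1)n - (3k-4)s`, then `e(H) ≤ g_k(n,s)`. -/
theorem stmt_5 {α : Type*} [Fintype α] (F : SimpleGraph α) (k : ℕ) (hk : 2 ≤ k)
    (hreg : F.IsRegularOfDegree k) (hr : Fintype.card α = 3 * k - 1)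
    (w : α → ℕ) (n s : ℕ) (hn : n = ∑ a, w a)
    (hs : ∀ a, ∑ b ∈ F.neighborFinset a, w b ≤ s)
    (hlow : ∀ a, ((k : ℤ) - 1) * n - (3 * (k : ℤ) - 4) * s ≤ (w a : ℤ)) :
    ((F.blowup w).edgeFinset.card : ℚ) ≤ g k n s := by
  set L : ℚ := ((k : ℚ) - 1) * n - (3 * (k : ℚ) - 4) * s
  have hedges : 2 * ((F.blowup w).edgeFinset.card : ℚ) =
      ∑ a, (w a : ℚ) * ∑ b ∈ F.neighborFinset a, (w b : ℚ) := by
    exact_mod_cast F.two_mul_card_edgeFinset_blowup w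
  have hdeg : ∑ a, ∑ b ∈ F.neighborFinset a, (w b : ℚ) = k * n := by
    rw [hreg.sum_sum_neighborFinset, hn, nsmul_eq_mul, Nat.cast_sum]
  have hcard : ((univ : Finset α).card : ℚ) = 3 * k - 1 := by
    rw [card_univ, hr, Nat.cast_sub (by omega)]
    push_cast
    ring
  have hbound := univ.sum_mul_le_of_forall_le
    (w := fun a => (w a : ℚ)) (d := fun a => ∑ b ∈ F.neighborFinset a, (w b : ℚ))
    (L := L) (S := s) (fun a _ => by simpa [L] using (Int.cast_le (R := ℚ)).2 (hlow a))
    (fun a _ => by exact_mod_cast hs a)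
  rw [← hedges, hdeg, hcard, ← Nat.cast_sum, ← hn] at hbound
  have hg : L * (k * n) + (n - (3 * k - 1) * L) * s = 2 * g k n s := by
    simp only [L, g]
    ring
  linarith
end

section
/- For every integer k ≥ 2, the Andrásfai graph Γ_k contains an induced copy of Γ_{k−1}; concretely, Γ_k minus the three vertices v_0, v_k, v_{2k} is isomorphic to Γ_{k−1}. -/
open Finset

/-- The Andrásfai graph `Γ_k`: vertices `0, ..., 3k-2`, with `i` adjacent to `j`
iff the cyclic difference of `i` and `j` modulo `3k-1` lies in `{k, ..., 2k-1}`. -/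
def andrasfai (k : ℕ) : SimpleGraph (Fin (3 * k - 1)) where
  Adj i j := i ≠ j ∧
    ((i.val + (3 * k - 1) - j.val) % (3 * k - 1) ∈ Finset.Icc k (2 * k - 1) ∨
     (j.val + (3 * k - 1) - i.val) % (3 * k - 1) ∈ Finset.Icc k (2 * k - 1))
  symm := ⟨fun i j h => ⟨h.1.symm, h.2.symm⟩⟩
  loopless := ⟨fun i h => h.1 rfl⟩

/-!
Deleting `0, k, 2k` leaves three blocks of `k - 1` consecutive vertices; shifting them down by
`1, 2, 3` closes the gaps and yields `0, ..., 3k - 5`, the vertices of `Γ_{k-1}`. Since the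
deleted vertices are `k` apart, two kept vertices at distance `d ≥ k` have one or two deleted
vertices between them, and `k ≤ d ≤ 2k - 1` turns into `k - 1 ≤ d' ≤ 2k - 3` for the shifted
distance `d'` (a pair at distance `2k - 1` straddling two deleted vertices would need a vertex
beyond `3k - 2`).
-/

theorem add_sub_mod_eq_ite {a b N : ℕ} (ha : a < N) (hb : b < N) :
    (a + N - b) % N = if b ≤ a then a - b else a + N - b := by
  split_ifs with h
  · rw [show a + N - b = a - b + N by omega, Nat.add_mod_right, Nat.mod_eq_of_lt (by omega)]
  · exact Nat.mod_eq_of_lt (by omega)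

theorem andrasfai_adj_iff {k : ℕ} {i j : Fin (3 * k - 1)} :
    (andrasfai k).Adj i j ↔
      (k ≤ i.val - j.val ∧ i.val - j.val ≤ 2 * k - 1) ∨
      (k ≤ j.val - i.val ∧ j.val - i.val ≤ 2 * k - 1) := by
  have hi := i.isLt
  have hj := j.isLt
  change i ≠ j ∧ _ ↔ _
  rw [add_sub_mod_eq_ite hi hj, add_sub_mod_eq_ite hj hi, mem_Icc, mem_Icc, ne_eq, Fin.ext_iff]
  split_ifs <;> omega

namespace Andrasfai

def Kept (k v : ℕ) : Prop := v ≠ 0 ∧ v ≠ k ∧ v ≠ 2 * k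

/-- `collapse k` closes the gaps left by deleting `0, k, 2k`; `expand k` reopens them. -/
def collapse (k v : ℕ) : ℕ :=
  if v < k then v - 1 else if v < 2 * k then v - 2 else v - 3

def expand (k w : ℕ) : ℕ :=
  if w < k - 1 then w + 1 else if w < 2 * k - 2 then w + 2 else w + 3

variable {k : ℕ}

theorem collapse_lt {v : ℕ} (hv : Kept k v) (hvk : v < 3 * k - 1) :
    collapse k v < 3 * (k - 1) - 1 := by
  unfold Kept at hv; unfold collapse; split_ifs <;> omega

theorem kept_expand (w : ℕ) : Kept k (expand k w) := by
  unfold Kept expand; split_ifs <;> omega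

theorem expand_lt {w : ℕ} (hw : w < 3 * (k - 1) - 1) : expand k w < 3 * k - 1 := by
  unfold expand; split_ifs <;> omega

theorem expand_collapse {v : ℕ} (hv : Kept k v) (hvk : v < 3 * k - 1) :
    expand k (collapse k v) = v := by
  unfold Kept at hv; unfold expand collapse; split_ifs <;> omega

theorem collapse_expand (w : ℕ) : collapse k (expand k w) = w := by
  unfold expand collapse; split_ifs <;> omega

theorem window_iff_collapse {u v : ℕ} (hu : Kept k u) (hv : Kept k v) (hvk : v < 3 * k - 1) :
    (k ≤ v - u ∧ v - u ≤ 2 * k - 1) ↔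
      (k - 1 ≤ collapse k v - collapse k u ∧ collapse k v - collapse k u ≤ 2 * (k - 1) - 1) := by
  unfold Kept at hu hv; unfold collapse; split_ifs <;> omega

def keptEquiv (k : ℕ) : {v : Fin (3 * k - 1) // Kept k v} ≃ Fin (3 * (k - 1) - 1) where
  toFun v := ⟨collapse k v.1, collapse_lt v.2 v.1.isLt⟩
  invFun w := ⟨⟨expand k w, expand_lt w.isLt⟩, kept_expand w⟩
  left_inv v := Subtype.ext <| Fin.ext <| expand_collapse v.2 v.1.isLt
  right_inv w := Fin.ext <| collapse_expand w

end Andrasfai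

theorem stmt_6_general (k : ℕ) :
    Nonempty
      (((andrasfai k).induce
          {v : Fin (3 * k - 1) | v.val ≠ 0 ∧ v.val ≠ k ∧ v.val ≠ 2 * k}) ≃g
        andrasfai (k - 1)) := by
  refine ⟨⟨Andrasfai.keptEquiv k, fun {u v} => ?_⟩⟩
  rw [SimpleGraph.comap_adj, andrasfai_adj_iff, andrasfai_adj_iff]
  exact or_congr (Andrasfai.window_iff_collapse v.2 u.2 u.1.isLt).symm
    (Andrasfai.window_iff_collapse u.2 v.2 v.1.isLt).symm

/-- For `k ≥ 2`, the Andrásfai graph `Γ_k` minus the three vertices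
`v_0, v_k, v_{2k}` is isomorphic to `Γ_{k-1}`. -/
theorem stmt_6 (k : ℕ) (hk : 2 ≤ k) :
    Nonempty
      (((andrasfai k).induce
          {v : Fin (3 * k - 1) | v.val ≠ 0 ∧ v.val ≠ k ∧ v.val ≠ 2 * k}) ≃g
        andrasfai (k - 1)) :=
  stmt_6_general k
end

section
/- For every integer k ≥ 2 and real (or integer) n, s with kn/(3k−1) ≤ s < (k−1)n/(3k−4), the minimum over all ℓ ≥ 1 of g_ℓ(n,s) is attained at ℓ = k, i.e., g_k(n,s) ≤ g_ℓ(n,s) for all ℓ ≥ 1, where g_ℓ(n,s) = ℓ(ℓ−1)n²/2 − ℓ(3ℓ−4)ns + (3ℓ−4)(3ℓ−1)s²/2. -/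
/-- The function `g_l(n,s) = l(l-1)n²/2 - l(3l-4)ns + (3l-4)(3l-1)s²/2` for real `n, s`. -/
noncomputable def gR (l : ℕ) (n s : ℝ) : ℝ :=
  (l : ℝ) * ((l : ℝ) - 1) * n ^ 2 / 2
    - (l : ℝ) * (3 * (l : ℝ) - 4) * n * s
    + (3 * (l : ℝ) - 4) * (3 * (l : ℝ) - 1) * s ^ 2 / 2

/-- For `k ≥ 2` and reals `n, s` with `kn/(3k-1) ≤ s < (k-1)n/(3k-4)`, the minimum
of `g_l(n,s)` over `l ≥ 1` is attained at `l = k`. -/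
theorem stmt_13 (k : ℕ) (hk : 2 ≤ k) (n s : ℝ)
    (h1 : (k : ℝ) * n / (3 * (k : ℝ) - 1) ≤ s)
    (h2 : s < ((k : ℝ) - 1) * n / (3 * (k : ℝ) - 4)) :
    ∀ l : ℕ, 1 ≤ l → gR k n s ≤ gR l n s := by
  have hk2 : (2:ℝ) ≤ (k:ℝ) := by exact_mod_cast hk
  have hk4 : (0:ℝ) < 3 * (k:ℝ) - 4 := by linarith
  have hk1 : (0:ℝ) < 3 * (k:ℝ) - 1 := by linarith
  have hA : (k:ℝ) * n ≤ s * (3 * (k:ℝ) - 1) := by rwa [div_le_iff₀ hk1] at h1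
  have hB : s * (3 * (k:ℝ) - 4) < ((k:ℝ) - 1) * n := by rwa [lt_div_iff₀ hk4] at h2
  -- from hA: k(3s-n) ≥ s ; from hB: (k-1)(3s-n) < s ; hence n < 3s
  have h3 : n < 3 * s := by nlinarith
  have hdiff : ∀ l : ℕ, gR (l + 1) n s - gR l n s
      = (3 * s - n) * ((l : ℝ) * (3 * s - n) - s) := by
    intro l
    simp only [gR]
    push_cast
    ring
  have hup : ∀ l : ℕ, k ≤ l → gR k n s ≤ gR l n s := by
    intro l hl
    induction l, hl using Nat.le_induction with
    | base => exact le_refl _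
    | succ m hm ih =>
      have hd := hdiff m
      have hmk : (k:ℝ) ≤ (m:ℝ) := by exact_mod_cast hm
      have hpos : (0:ℝ) ≤ 3 * s - n := by linarith
      have hks : s ≤ (k:ℝ) * (3 * s - n) := by nlinarith
      have hms : (k:ℝ) * (3 * s - n) ≤ (m:ℝ) * (3 * s - n) :=
        mul_le_mul_of_nonneg_right hmk hpos
      have hnn : 0 ≤ (3 * s - n) * ((m:ℝ) * (3 * s - n) - s) :=
        mul_nonneg hpos (by linarith)
      linarith
  have hdownstep : ∀ l : ℕ, l + 1 ≤ k → gR (l + 1) n s ≤ gR l n s := by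
    intro l hl
    have hd := hdiff l
    have hlk : (l:ℝ) ≤ (k:ℝ) - 1 := by
      have : (l:ℝ) + 1 ≤ (k:ℝ) := by exact_mod_cast hl
      linarith
    have hpos : (0:ℝ) ≤ 3 * s - n := by linarith
    have hks : ((k:ℝ) - 1) * (3 * s - n) < s := by nlinarith
    have hls : (l:ℝ) * (3 * s - n) ≤ ((k:ℝ) - 1) * (3 * s - n) :=
      mul_le_mul_of_nonneg_right hlk hpos
    have hnp : (3 * s - n) * ((l:ℝ) * (3 * s - n) - s) ≤ 0 :=
      mul_nonpos_of_nonneg_of_nonpos hpos (by linarith)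
    linarith
  have hdown : ∀ j : ℕ, j + 1 ≤ k → gR k n s ≤ gR (k - j) n s := by
    intro j
    induction j with
    | zero => intro _; simp
    | succ i ih =>
      intro hij
      have h1' : i + 1 ≤ k := by omega
      have ihh := ih h1'
      have heq : k - i = (k - (i + 1)) + 1 := by omega
      have hstep := hdownstep (k - (i + 1)) (by omega)
      rw [heq] at ihh
      linarith
  intro l hl
  rcases le_or_gt k l with h | h
  · exact hup l h
  · have hj : (k - l) + 1 ≤ k := by omega
    have := hdown (k - l) hj
    have : k - (k - l) = l := by omega
    rw [this] at *
    have := hdown (k - l) hj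
    rwa [show k - (k - l) = l from by omega] at this
end

section
/- For every integer i ≥ 2 and μ, ν ∈ {0,1}, the weighted blow-up G_i^{μν} = Υ_i^{μν}(ω_{μν}) of the Vega graph Υ_i^{μν} is a k-regular graph on 3k−1 vertices, where k = 9i − (6 + μ + ν). -/
open Finset

/-- Base adjacency relation for the Vega graph: vertices are the vertices of the
Andrasfai graph (inl) together with x,y,a,b,c,u,v,w coded as inr 0,...,inr 7. -/
def vegaBase (i : ℕ) : (Fin (3 * i - 1) ⊕ Fin 8) → (Fin (3 * i - 1) ⊕ Fin 8) → Prop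
  | Sum.inl j, Sum.inl l =>
      (l.val + (3 * i - 1) - j.val) % (3 * i - 1) ∈ Finset.Icc i (2 * i - 1)
  | Sum.inr h, Sum.inl j =>
      ((h = 2 ∨ h = 5) ∧ j.val < i) ∨
      ((h = 3 ∨ h = 6) ∧ i ≤ j.val ∧ j.val < 2 * i) ∨
      ((h = 4 ∨ h = 7) ∧ 2 * i ≤ j.val)
  | Sum.inl _, Sum.inr _ => False
  | Sum.inr h, Sum.inr h' =>
      (h = 0 ∧ h' = 1) ∨ (h = 2 ∧ h' = 6) ∨ (h = 6 ∧ h' = 4) ∨ (h = 4 ∧ h' = 5) ∨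
      (h = 5 ∧ h' = 3) ∨ (h = 3 ∧ h' = 7) ∨ (h = 7 ∧ h' = 2) ∨
      (h = 0 ∧ h' = 2) ∨ (h = 0 ∧ h' = 3) ∨ (h = 0 ∧ h' = 4) ∨
      (h = 1 ∧ h' = 5) ∨ (h = 1 ∧ h' = 6) ∨ (h = 1 ∧ h' = 7)

/-- The Vega graph Υ_i^{00}. -/
def vega (i : ℕ) : SimpleGraph (Fin (3 * i - 1) ⊕ Fin 8) where
  Adj z z' := z ≠ z' ∧ (vegaBase i z z' ∨ vegaBase i z' z)
  symm := ⟨fun _ _ h => ⟨h.1.symm, h.2.symm⟩⟩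
  loopless := ⟨fun _ h => h.1 rfl⟩

/-- The weight ω_{00}. -/
def vegaW00 (i : ℕ) : (Fin (3 * i - 1) ⊕ Fin 8) → ℤ
  | Sum.inl j => if j.val = 0 ∨ j.val = 2 * i - 1 then 1 else 3
  | Sum.inr h => if h = 0 ∨ h = 1 then 1
      else if h = 4 ∨ h = 7 then 3 * (i : ℤ) - 3 else 3 * (i : ℤ) - 2

/-- The correction function f (1 on u,v,w,y; -1 on x). -/
def vegaF (i : ℕ) : (Fin (3 * i - 1) ⊕ Fin 8) → ℤ
  | Sum.inl _ => 0
  | Sum.inr h => if h = 1 ∨ h = 5 ∨ h = 6 ∨ h = 7 then 1 else if h = 0 then -1 else 0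

/-- The correction function g (1 on b, v, v_{i-1}, v_{2i-1}; -1 on v_0). -/
def vegaG (i : ℕ) : (Fin (3 * i - 1) ⊕ Fin 8) → ℤ
  | Sum.inl j => if j.val = i - 1 ∨ j.val = 2 * i - 1 then 1
      else if j.val = 0 then -1 else 0
  | Sum.inr h => if h = 3 ∨ h = 6 then 1 else 0

/-- The weight ω_{μν} = ω_{00} - μ f - ν g. -/
def vegaW (i μ ν : ℕ) (z : Fin (3 * i - 1) ⊕ Fin 8) : ℤ :=
  vegaW00 i z - μ * vegaF i z - ν * vegaG i z

/-!
A vertex of the blow-up lying over `z` has degree `∑_{z' ∼ z} ω(z')`, so the blow-up is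
`k`-regular as soon as every vertex of positive weight has weighted degree `k`, and it has
`∑_z ω(z)` vertices.

On the Andrásfai part, `ω` is `3` except at the three special vertices `v_0, v_{i-1}, v_{2i-1}`.
The neighbourhood of `v_j` in `Γ_i` is a cyclic interval of length `i` (the `v_l` with
`i ≤ |l - j| ≤ 2i - 1`), so its weight is `3i` corrected by the special vertices it contains;
each of the six cycle vertices sees a block `v_0..v_{i-1}`, `v_i..v_{2i-1}` or `v_{2i}..v_{3i-2}`.
The vertices `y` (when `μ = 1`) and `v_{2i-1}` (when `ν = 1`) have weight zero and impose no
condition; this is how `ω_{μν}` encodes the deletions in `Υ_i^{μν}`.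
-/

open Finset

namespace SimpleGraph

variable {α : Type*} [Fintype α] (F : SimpleGraph α) [DecidableRel F.Adj] (w : α → ℕ)

theorem blowup_degree (x : Σ a, Fin (w a)) [Fintype ((F.blowup w).neighborSet x)] :
    (F.blowup w).degree x = ∑ a ∈ univ.filter (F.Adj x.1), w a := by
  let e : (F.blowup w).neighborSet x ≃ Σ a : {a // F.Adj x.1 a}, Fin (w a) :=
    { toFun := fun y => ⟨⟨y.1.1, y.2⟩, y.1.2⟩
      invFun := fun p => ⟨⟨p.1.1, p.2⟩, p.1.2⟩
      left_inv := fun _ => rfl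
      right_inv := fun _ => rfl }
  rw [← card_neighborSet_eq_degree, Fintype.card_congr e, Fintype.card_sigma]
  simp only [Fintype.card_fin]
  exact (sum_subtype _ (fun _ => mem_filter_univ _) w).symm

theorem blowup_isRegularOfDegree [(F.blowup w).LocallyFinite] {k : ℕ}
    (h : ∀ a, 0 < w a → ∑ b ∈ univ.filter (F.Adj a), w b = k) :
    (F.blowup w).IsRegularOfDegree k :=
  fun x => (F.blowup_degree w x).trans (h x.1 x.2.pos)

end SimpleGraph

theorem Finset.natCast_sum_toNat {ι : Type*} (s : Finset ι) (f : ι → ℤ)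
    (hf : ∀ x ∈ s, 0 ≤ f x) : ((∑ x ∈ s, (f x).toNat : ℕ) : ℤ) = ∑ x ∈ s, f x := by
  push_cast
  exact sum_congr rfl fun x hx => Int.toNat_of_nonneg (hf x hx)

theorem sum_fin_ite_eq_sum_filter_range {M : Type*} [AddCommMonoid M] (n : ℕ) (P : ℕ → Prop)
    [DecidablePred P] (f : ℕ → M) :
    ∑ l : Fin n, (if P l then f l else 0) = ∑ l ∈ (range n).filter P, f l := by
  rw [sum_filter, Fin.sum_univ_eq_sum_range (fun l => if P l then f l else 0)]

def andrasfaiWeight (i ν l : ℕ) : ℤ :=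
  3 - (if l = 0 then 2 - (ν : ℤ) else 0) - (if l = i - 1 then (ν : ℤ) else 0)
    - (if l = 2 * i - 1 then 2 + (ν : ℤ) else 0)

theorem sum_andrasfaiWeight (i ν : ℕ) (s : Finset ℕ) :
    ∑ l ∈ s, andrasfaiWeight i ν l = 3 * (#s : ℤ) - (if 0 ∈ s then 2 - (ν : ℤ) else 0)
      - (if i - 1 ∈ s then (ν : ℤ) else 0) - (if 2 * i - 1 ∈ s then 2 + (ν : ℤ) else 0) := by
  simp [andrasfaiWeight, sum_sub_distrib, sum_ite_eq', mul_comm]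

theorem sum_andrasfaiWeight_lt (i ν : ℕ) (hi : 2 ≤ i) :
    ∑ l : Fin (3 * i - 1), (if (l : ℕ) < i then andrasfaiWeight i ν l else 0)
      = 3 * (i : ℤ) - 2 := by
  have hs : (range (3 * i - 1)).filter (· < i) = range i := by
    ext l; simp only [mem_filter, mem_range]; omega
  rw [sum_fin_ite_eq_sum_filter_range _ (· < i), hs, sum_andrasfaiWeight]
  simp only [card_range, mem_range]
  split_ifs <;> omega

theorem sum_andrasfaiWeight_Ico (i ν : ℕ) (hi : 2 ≤ i) :
    ∑ l : Fin (3 * i - 1), (if i ≤ (l : ℕ) ∧ (l : ℕ) < 2 * i then andrasfaiWeight i ν l else 0)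
      = 3 * (i : ℤ) - 2 - ν := by
  have hs : (range (3 * i - 1)).filter (fun l => i ≤ l ∧ l < 2 * i) = Ico i (2 * i) := by
    ext l; simp only [mem_filter, mem_range, mem_Ico]; omega
  rw [sum_fin_ite_eq_sum_filter_range _ (fun l => i ≤ l ∧ l < 2 * i), hs, sum_andrasfaiWeight]
  simp only [Nat.card_Ico, mem_Ico]
  split_ifs <;> omega

theorem sum_andrasfaiWeight_ge (i ν : ℕ) (hi : 2 ≤ i) :
    ∑ l : Fin (3 * i - 1), (if 2 * i ≤ (l : ℕ) then andrasfaiWeight i ν l else 0)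
      = 3 * (i : ℤ) - 3 := by
  have hs : (range (3 * i - 1)).filter (2 * i ≤ ·) = Ico (2 * i) (3 * i - 1) := by
    ext l; simp only [mem_filter, mem_range, mem_Ico]; omega
  rw [sum_fin_ite_eq_sum_filter_range _ (2 * i ≤ ·), hs, sum_andrasfaiWeight]
  simp only [Nat.card_Ico, mem_Ico]
  split_ifs <;> omega

theorem sum_andrasfaiWeight_univ (i ν : ℕ) (hi : 2 ≤ i) :
    ∑ l : Fin (3 * i - 1), andrasfaiWeight i ν l = 9 * (i : ℤ) - 7 - ν := by
  rw [Fin.sum_univ_eq_sum_range (andrasfaiWeight i ν), sum_andrasfaiWeight]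
  simp only [card_range, mem_range]
  split_ifs <;> omega

theorem offset_mod_mem_Icc_iff {i p j : ℕ} (hp : p < 3 * i - 1) (hj : j < 3 * i - 1) :
    (p + (3 * i - 1) - j) % (3 * i - 1) ∈ Icc i (2 * i - 1) ↔
      (j + i ≤ p ∧ p < j + 2 * i) ∨ (p + i ≤ j ∧ j < p + 2 * i) := by
  rw [mem_Icc]
  rcases le_or_gt j p with h | h
  · rw [Nat.mod_eq_sub_mod (by omega), Nat.mod_eq_of_lt (by omega)]
    omega
  · rw [Nat.mod_eq_of_lt (by omega)]
    omega

def andrasfaiNeighborFinset (i j : ℕ) : Finset ℕ :=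
  Ico (j + i) (min (3 * i - 1) (j + 2 * i)) ∪ Ico (j + 1 - 2 * i) (j + 1 - i)

theorem filter_range_eq_andrasfaiNeighborFinset {i j : ℕ} (hj : j < 3 * i - 1) :
    (range (3 * i - 1)).filter
        (fun l => (j + i ≤ l ∧ l < j + 2 * i) ∨ (l + i ≤ j ∧ j < l + 2 * i))
      = andrasfaiNeighborFinset i j := by
  ext l; simp only [andrasfaiNeighborFinset, mem_filter, mem_range, mem_union, mem_Ico]; omega

theorem card_andrasfaiNeighborFinset (i j : ℕ) : #(andrasfaiNeighborFinset i j) = i := by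
  rw [andrasfaiNeighborFinset, card_union_of_disjoint, Nat.card_Ico, Nat.card_Ico]
  · omega
  · rw [disjoint_left]; intro l; simp only [mem_Ico]; omega

theorem vega_adj_inl_inl {i : ℕ} (j l : Fin (3 * i - 1)) :
    (vega i).Adj (Sum.inl j) (Sum.inl l) ↔
      (j + i ≤ (l : ℕ) ∧ (l : ℕ) < j + 2 * i) ∨ ((l : ℕ) + i ≤ j ∧ (j : ℕ) < l + 2 * i) := by
  simp only [vega, vegaBase, offset_mod_mem_Icc_iff l.isLt j.isLt,
    offset_mod_mem_Icc_iff j.isLt l.isLt, ne_eq, Sum.inl.injEq, ← Fin.val_inj]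
  omega

theorem vega_adj_inr_inl (i : ℕ) (h : Fin 8) (j : Fin (3 * i - 1)) :
    (vega i).Adj (Sum.inr h) (Sum.inl j) ↔
      ((h = 2 ∨ h = 5) ∧ j.val < i) ∨ ((h = 3 ∨ h = 6) ∧ i ≤ j.val ∧ j.val < 2 * i) ∨
        ((h = 4 ∨ h = 7) ∧ 2 * i ≤ j.val) := by
  simp [vega, vegaBase]

theorem vegaW_inl (i μ ν : ℕ) (hi : 2 ≤ i) (l : Fin (3 * i - 1)) :
    vegaW i μ ν (Sum.inl l) = andrasfaiWeight i ν l := by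
  have := l.isLt
  simp only [vegaW, vegaW00, vegaF, vegaG, andrasfaiWeight]
  split_ifs <;> omega

theorem vegaW_nonneg {i μ ν : ℕ} (hi : 2 ≤ i) (hμ : μ ≤ 1) (hν : ν ≤ 1)
    (z : Fin (3 * i - 1) ⊕ Fin 8) : 0 ≤ vegaW i μ ν z := by
  rcases z with j | h <;> simp only [vegaW, vegaW00, vegaF, vegaG] <;> split_ifs <;> omega

theorem sum_vegaW (i μ ν : ℕ) (hi : 2 ≤ i) :
    ∑ z, vegaW i μ ν z = 27 * (i : ℤ) - 19 - 3 * μ - 3 * ν := by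
  rw [Fintype.sum_sum_type, Fin.sum_univ_eight]
  simp only [vegaW_inl i μ ν hi, sum_andrasfaiWeight_univ i ν hi]
  simp only [vegaW, vegaW00, vegaF, vegaG, Fin.isValue, Fin.reduceEq, or_self, or_true, or_false,
    ↓reduceIte]
  omega

section WeightedDegree

open scoped Classical

variable {i : ℕ} (μ ν : ℕ)

theorem sum_andrasfaiWeight_neighbors (j : Fin (3 * i - 1)) :
    ∑ l : Fin (3 * i - 1),
        (if (vega i).Adj (Sum.inl j) (Sum.inl l) then andrasfaiWeight i ν l else 0)
      = 3 * i - (if i ≤ (j : ℕ) ∧ (j : ℕ) < 2 * i then 2 - (ν : ℤ) else 0)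
        - (if 2 * i ≤ (j : ℕ) + 1 then (ν : ℤ) else 0)
        - (if (j : ℕ) < i then 2 + (ν : ℤ) else 0) := by
  have hj := j.isLt
  simp only [vega_adj_inl_inl]
  rw [sum_fin_ite_eq_sum_filter_range _
      (fun l => (j + i ≤ l ∧ l < j + 2 * i) ∨ (l + i ≤ j ∧ j < l + 2 * i)),
    filter_range_eq_andrasfaiNeighborFinset hj, sum_andrasfaiWeight,
    card_andrasfaiNeighborFinset]
  congr 4 <;> apply propext <;> simp only [andrasfaiNeighborFinset, mem_union, mem_Ico] <;>
    omega

theorem sum_vegaW_neighbors_inl (hi : 2 ≤ i) (j : Fin (3 * i - 1))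
    (hz : 0 < vegaW i μ ν (Sum.inl j)) :
    ∑ a ∈ univ.filter ((vega i).Adj (Sum.inl j)), vegaW i μ ν a = 9 * (i : ℤ) - 6 - μ - ν := by
  have hj := j.isLt
  -- `v_{2i-1}` has weight `1 - ν`, and its weighted degree is `9i - 6 - μ - 2ν`.
  have hν : (j : ℕ) = 2 * i - 1 → ν = 0 := by
    intro h
    rw [vegaW_inl i μ ν hi, andrasfaiWeight, if_neg (by omega), if_neg (by omega), if_pos h] at hz
    omega
  rw [sum_filter, Fintype.sum_sum_type, Fin.sum_univ_eight]
  simp only [vegaW_inl i μ ν hi, sum_andrasfaiWeight_neighbors ν,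
    (vega i).adj_comm (Sum.inl j) (Sum.inr _), vega_adj_inr_inl]
  simp only [vegaW, vegaW00, vegaF, vegaG, Fin.isValue, Fin.reduceEq, or_self, or_true, or_false,
    false_or, true_and, false_and, ↓reduceIte, mul_zero, mul_one, sub_zero, zero_add]
  split_ifs <;> omega

theorem sum_vegaW_neighbors_inr (hi : 2 ≤ i) (h : Fin 8)
    (hz : 0 < vegaW i μ ν (Sum.inr h)) :
    ∑ a ∈ univ.filter ((vega i).Adj (Sum.inr h)), vegaW i μ ν a = 9 * (i : ℤ) - 6 - μ - ν := by
  rw [sum_filter, Fintype.sum_sum_type, Fin.sum_univ_eight]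
  simp only [vegaW_inl i μ ν hi, vega_adj_inr_inl]
  fin_cases h <;>
    simp only [Fin.zero_eta, Fin.mk_one, Fin.reduceFinMk, Fin.isValue, Fin.reduceEq,
      vega, vegaBase, ne_eq, Sum.inr.injEq, true_and, false_and, and_true, and_false, false_or,
      or_self, or_true, or_false, not_false_eq_true, not_true_eq_false, ↓reduceIte, hi,
      sum_const_zero, sum_andrasfaiWeight_lt, sum_andrasfaiWeight_Ico, sum_andrasfaiWeight_ge,
      vegaW, vegaW00, vegaF, vegaG, mul_zero, mul_one, sub_zero, zero_add, add_zero] at hz ⊢ <;>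
    omega

theorem sum_vegaW_neighbors (hi : 2 ≤ i) (z : Fin (3 * i - 1) ⊕ Fin 8)
    (hz : 0 < vegaW i μ ν z) :
    ∑ a ∈ univ.filter ((vega i).Adj z), vegaW i μ ν a = 9 * (i : ℤ) - 6 - μ - ν := by
  rcases z with j | h
  · exact sum_vegaW_neighbors_inl μ ν hi j hz
  · exact sum_vegaW_neighbors_inr μ ν hi h hz

end WeightedDegree

open scoped Classical in
/-- For i ≥ 2 and μ, ν ∈ {0,1}, the weighted blow-up G_i^{μν} of the Vega graph
Υ_i^{μν} by the weight ω_{μν} (vertices of weight 0 being the deleted ones) is a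
k-regular graph on 3k-1 vertices, where k = 9i - (6+μ+ν). -/
theorem stmt_15 (i μ ν : ℕ) (hi : 2 ≤ i) (hμ : μ ≤ 1) (hν : ν ≤ 1) :
    ((vega i).blowup fun z => (vegaW i μ ν z).toNat).IsRegularOfDegree
        (9 * i - (6 + μ + ν)) ∧
      Fintype.card (Σ z, Fin ((vegaW i μ ν z).toNat))
        = 3 * (9 * i - (6 + μ + ν)) - 1 := by
  have hw : ∀ z ∈ univ, 0 ≤ vegaW i μ ν z := fun z _ => vegaW_nonneg hi hμ hν z
  constructor
  · refine (vega i).blowup_isRegularOfDegree _ fun z hz => ?_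
    have hdeg := natCast_sum_toNat (univ.filter ((vega i).Adj z)) _
      fun a _ => hw a (mem_univ a)
    rw [sum_vegaW_neighbors μ ν hi z (by omega)] at hdeg
    omega
  · have hcard := natCast_sum_toNat _ _ hw
    rw [sum_vegaW i μ ν hi] at hcard
    rw [Fintype.card_sigma]
    simp only [Fintype.card_fin]
    omega
end

section
/- Let n ≥ s ≥ 1 and k ≥ 2 be integers such that s ∉ (kn/(3k−1), (k−1)n/(3k−4)). Then every triangle-free graph G on n vertices with independence number α(G) ≤ s satisfies e(G) ≤ g_k(n,s) = k(k−1)n²/2 − k(3k−4)ns + (3k−4)(3k−1)s²/2. -/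
open Finset

open scoped Classical in
/-- If `n ≥ s ≥ 1`, `k ≥ 2` and `s` does not lie in the open interval
`(kn/(3k-1), (k-1)n/(3k-4))`, then every triangle-free graph on `n` vertices with
independence number at most `s` has at most `g_k(n,s)` edges. -/
theorem stmt_18 {V : Type*} [Fintype V] (G : SimpleGraph V) (n s k : ℕ)
    (hs1 : 1 ≤ s) (hsn : s ≤ n) (hk : 2 ≤ k)
    (hcard : Fintype.card V = n)
    (hrange : ¬ ((k : ℚ) * n / (3 * (k : ℚ) - 1) < (s : ℚ) ∧
      (s : ℚ) < ((k : ℚ) - 1) * n / (3 * (k : ℚ) - 4)))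
    (htf : G.CliqueFree 3)
    (hindep : ∀ S : Finset V, (∀ a ∈ S, ∀ b ∈ S, ¬ G.Adj a b) → S.card ≤ s) :
    (G.edgeFinset.card : ℚ) ≤ g k n s := by
  have hdeg : ∀ v : V, G.degree v ≤ s := by
    intro v
    apply hindep
    intro a ha b hb hab
    rw [SimpleGraph.mem_neighborFinset] at ha hb
    exact htf {v, a, b} (SimpleGraph.is3Clique_triple_iff.2 ⟨ha, hb, hab⟩)
  have h2e : 2 * G.edgeFinset.card ≤ n * s := by
    calc 2 * G.edgeFinset.card = ∑ v : V, G.degree v := (G.sum_degrees_eq_twice_card_edges).symm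
    _ ≤ ∑ _v : V, s := Finset.sum_le_sum fun v _ => hdeg v
    _ = n * s := by rw [Finset.sum_const, Finset.card_univ, hcard, smul_eq_mul]
  have h2e' : 2 * (G.edgeFinset.card : ℚ) ≤ (n : ℚ) * s := by exact_mod_cast h2e
  have hkq : (2 : ℚ) ≤ (k : ℚ) := by exact_mod_cast hk
  have hd1 : (0 : ℚ) < 3 * (k : ℚ) - 1 := by linarith
  have hd2 : (0 : ℚ) < 3 * (k : ℚ) - 4 := by linarith
  have hsnq : (s : ℚ) ≤ (n : ℚ) := by exact_mod_cast hsn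
  rw [not_and_or, not_lt, not_lt] at hrange
  have hkey : (0 : ℚ) ≤ ((3 * (k : ℚ) - 1) * s - (k : ℚ) * n) *
      ((3 * (k : ℚ) - 4) * s - ((k : ℚ) - 1) * n) := by
    rcases hrange with h | h
    · rw [le_div_iff₀ hd1] at h
      have h2 : (3 * (k : ℚ) - 4) * s ≤ ((k : ℚ) - 1) * n := by nlinarith
      nlinarith
    · rw [div_le_iff₀ hd2] at h
      have h2 : (k : ℚ) * n ≤ (3 * (k : ℚ) - 1) * s := by nlinarith
      nlinarith
  unfold g
  nlinarith [hkey, h2e']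
end
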